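/- Let 0 < α < 1 and let u : (0,∞) → [0,∞) be measurable, integrable on (0,1), and suppose there exist constants 0 < c ≤ C such that c t^{α-1} ≤ u(t) ≤ C t^{α-1} for all t ≥ 1. Then there exist constants c' > 0, C' > 0 and s₀ ∈ (0,1] such that c' s^{-α} ≤ ∫₀^∞ e^{-st} u(t) dt ≤ C' s^{-α} for all s ∈ (0, s₀]. -/

import Mathlib

/-!
Split `∫₀^∞ e^{-st} u(t) dt` at `t = 1`. On `(0,1)` the integrand is at most `u`, which contributes
a constant, and a constant is `O(s^{-α})` for `s ≤ 1`. On `[1,∞)` the integrand is at most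
`C t^{α-1} e^{-st}`, whose integral over `(0,∞)` is `C Γ(α) s^{-α}`. For the lower bound, on
`[1/s, 2/s]` one has `e^{-st} ≥ e^{-2}` and `u(t) ≥ c (2/s)^{α-1}`, and this interval has length
`1/s`.
-/

open MeasureTheory Real Set

lemma lintegral_rpow_mul_exp_neg_mul_Ioi {a s : ℝ} (ha : 0 < a) (hs : 0 < s) :
    ∫⁻ t in Ioi (0 : ℝ), ENNReal.ofReal (t ^ (a - 1) * exp (-(s * t)))
      = ENNReal.ofReal (Gamma a * s ^ (-a)) := by
  have hint : IntegrableOn (fun t : ℝ => t ^ (a - 1) * exp (-(s * t))) (Ioi 0) := by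
    simpa only [rpow_one, neg_mul] using
      integrableOn_rpow_mul_exp_neg_mul_rpow (p := 1) (by linarith) one_pos hs
  have hnonneg : 0 ≤ᵐ[volume.restrict (Ioi 0)] fun t : ℝ => t ^ (a - 1) * exp (-(s * t)) :=
    ae_restrict_of_forall_mem measurableSet_Ioi fun t (ht : 0 < t) => by positivity
  rw [← ofReal_integral_eq_lintegral_ofReal hint hnonneg, integral_rpow_mul_exp_neg_mul_Ioi ha hs,
    one_div, inv_rpow hs.le, ← rpow_neg hs.le, mul_comm]

lemma lintegral_Ioo_exp_neg_mul_le_integral {u : ℝ → ℝ} {s : ℝ} (hs : 0 ≤ s)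
    (hu : ∀ t ∈ Ioo (0 : ℝ) 1, 0 ≤ u t) (hint : IntegrableOn u (Ioo 0 1)) :
    ∫⁻ t in Ioo (0 : ℝ) 1, ENNReal.ofReal (exp (-(s * t)) * u t)
      ≤ ENNReal.ofReal (∫ t in Ioo (0 : ℝ) 1, u t) := by
  rw [ofReal_integral_eq_lintegral_ofReal hint (ae_restrict_of_forall_mem measurableSet_Ioo hu)]
  refine setLIntegral_mono' measurableSet_Ioo fun t ht => ENNReal.ofReal_le_ofReal ?_
  have hexp : exp (-(s * t)) ≤ 1 := exp_le_one_iff.2 (by nlinarith [ht.1])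
  nlinarith [hu t ht]

lemma lintegral_Ici_exp_neg_mul_le_of_le_rpow {u : ℝ → ℝ} {a C s : ℝ} (ha : 0 < a) (hs : 0 < s)
    (hC : 0 ≤ C) (hu : ∀ t ≥ (1 : ℝ), u t ≤ C * t ^ (a - 1)) :
    ∫⁻ t in Ici (1 : ℝ), ENNReal.ofReal (exp (-(s * t)) * u t)
      ≤ ENNReal.ofReal (C * Gamma a * s ^ (-a)) :=
  calc ∫⁻ t in Ici (1 : ℝ), ENNReal.ofReal (exp (-(s * t)) * u t)
      ≤ ∫⁻ t in Ici (1 : ℝ), ENNReal.ofReal C * ENNReal.ofReal (t ^ (a - 1) * exp (-(s * t))) := by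
        refine setLIntegral_mono' measurableSet_Ici fun t ht => ?_
        rw [← ENNReal.ofReal_mul hC]
        refine ENNReal.ofReal_le_ofReal ?_
        nlinarith [hu t ht, exp_pos (-(s * t))]
    _ ≤ ∫⁻ t in Ioi (0 : ℝ), ENNReal.ofReal C * ENNReal.ofReal (t ^ (a - 1) * exp (-(s * t))) :=
        lintegral_mono_set fun t (ht : 1 ≤ t) => show 0 < t by linarith
    _ = ENNReal.ofReal (C * Gamma a * s ^ (-a)) := by
        rw [lintegral_const_mul' _ _ ENNReal.ofReal_ne_top, lintegral_rpow_mul_exp_neg_mul_Ioi ha hs,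
          ← ENNReal.ofReal_mul hC, mul_assoc]

lemma lintegral_exp_neg_mul_le_of_le_rpow {u : ℝ → ℝ} {a C s : ℝ} (ha : 0 < a) (hs0 : 0 < s)
    (hs1 : s ≤ 1) (hu0 : ∀ t > (0 : ℝ), 0 ≤ u t) (hint : IntegrableOn u (Ioo 0 1)) (hC : 0 ≤ C)
    (hu : ∀ t ≥ (1 : ℝ), u t ≤ C * t ^ (a - 1)) :
    ∫⁻ t in Ioi (0 : ℝ), ENNReal.ofReal (exp (-(s * t)) * u t)
      ≤ ENNReal.ofReal (((∫ t in Ioo (0 : ℝ) 1, u t) + C * Gamma a) * s ^ (-a)) := by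
  set I := ∫ t in Ioo (0 : ℝ) 1, u t
  have hI : 0 ≤ I := setIntegral_nonneg measurableSet_Ioo fun t ht => hu0 t ht.1
  have hspow : 1 ≤ s ^ (-a) := one_le_rpow_of_pos_of_le_one_of_nonpos hs0 hs1 (by linarith)
  calc ∫⁻ t in Ioi (0 : ℝ), ENNReal.ofReal (exp (-(s * t)) * u t)
      ≤ (∫⁻ t in Ioo (0 : ℝ) 1, ENNReal.ofReal (exp (-(s * t)) * u t))
          + ∫⁻ t in Ici (1 : ℝ), ENNReal.ofReal (exp (-(s * t)) * u t) := by
        rw [← Ioo_union_Ici_eq_Ioi one_pos]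
        exact lintegral_union_le _ _ _
    _ ≤ ENNReal.ofReal I + ENNReal.ofReal (C * Gamma a * s ^ (-a)) :=
        add_le_add (lintegral_Ioo_exp_neg_mul_le_integral hs0.le (fun t ht => hu0 t ht.1) hint)
          (lintegral_Ici_exp_neg_mul_le_of_le_rpow ha hs0 hC hu)
    _ ≤ ENNReal.ofReal ((I + C * Gamma a) * s ^ (-a)) := by
        have : 0 ≤ C * Gamma a * s ^ (-a) := by positivity
        rw [← ENNReal.ofReal_add hI this]
        exact ENNReal.ofReal_le_ofReal (by nlinarith)

lemma ofReal_le_lintegral_exp_neg_mul_of_rpow_le {u : ℝ → ℝ} {a c s : ℝ} (ha : a ≤ 1) (hc : 0 ≤ c)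
    (hs0 : 0 < s) (hs1 : s ≤ 1) (hu : ∀ t ≥ (1 : ℝ), c * t ^ (a - 1) ≤ u t) :
    ENNReal.ofReal (c * exp (-2) * 2 ^ (a - 1) * s ^ (-a))
      ≤ ∫⁻ t in Ioi (0 : ℝ), ENNReal.ofReal (exp (-(s * t)) * u t) := by
  have hlen : (2 / s) ^ (a - 1) * (1 / s) = 2 ^ (a - 1) * s ^ (-a) := by
    rw [div_rpow zero_le_two hs0.le, one_div, ← rpow_neg_one s, div_eq_mul_inv,
      ← rpow_neg hs0.le, mul_assoc, ← rpow_add hs0]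
    ring_nf
  have hbound : ∀ t ∈ Icc (1 / s) (2 / s),
      c * exp (-2) * (2 / s) ^ (a - 1) ≤ exp (-(s * t)) * u t := by
    intro t ⟨ht1, ht2⟩
    have ht : 1 ≤ t := (one_le_one_div hs0 hs1).trans ht1
    have hst : s * t ≤ 2 := by rwa [le_div_iff₀' hs0] at ht2
    have hexp : exp (-2) ≤ exp (-(s * t)) := exp_le_exp.2 (by linarith)
    have hpow : c * (2 / s) ^ (a - 1) ≤ u t :=
      (mul_le_mul_of_nonneg_left (rpow_le_rpow_of_nonpos (by linarith) ht2 (by linarith)) hc).trans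
        (hu t ht)
    calc c * exp (-2) * (2 / s) ^ (a - 1) = exp (-2) * (c * (2 / s) ^ (a - 1)) := by ring
      _ ≤ exp (-(s * t)) * u t := mul_le_mul hexp hpow (by positivity) (exp_pos _).le
  calc ENNReal.ofReal (c * exp (-2) * 2 ^ (a - 1) * s ^ (-a))
      = ∫⁻ _ in Icc (1 / s) (2 / s), ENNReal.ofReal (c * exp (-2) * (2 / s) ^ (a - 1)) := by
        rw [setLIntegral_const, volume_Icc, div_sub_div_same, ← ENNReal.ofReal_mul (by positivity)]
        congr 1
        linear_combination (-(c * exp (-2))) * hlen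
    _ ≤ ∫⁻ t in Icc (1 / s) (2 / s), ENNReal.ofReal (exp (-(s * t)) * u t) :=
        setLIntegral_mono' measurableSet_Icc fun t ht => ENNReal.ofReal_le_ofReal (hbound t ht)
    _ ≤ ∫⁻ t in Ioi (0 : ℝ), ENNReal.ofReal (exp (-(s * t)) * u t) :=
        lintegral_mono_set fun t ht => lt_of_lt_of_le (by positivity) ht.1

theorem stmt_10_general (α : ℝ) (hα : α ∈ Set.Ioo (0:ℝ) 1)
    (u : ℝ → ℝ) (hupos : ∀ t > (0:ℝ), 0 ≤ u t)
    (huint : IntegrableOn u (Set.Ioo 0 1))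
    (c C : ℝ) (hc : 0 < c)
    (hbound : ∀ t ≥ (1:ℝ), c * t ^ (α - 1) ≤ u t ∧ u t ≤ C * t ^ (α - 1)) :
    ∃ c' > (0:ℝ), ∃ C' > (0:ℝ), ∃ s₀ ∈ Set.Ioc (0:ℝ) 1, ∀ s ∈ Set.Ioc (0:ℝ) s₀,
      ENNReal.ofReal (c' * s ^ (-α))
          ≤ (∫⁻ t in Set.Ioi (0:ℝ), ENNReal.ofReal (Real.exp (-(s * t)) * u t)) ∧
        (∫⁻ t in Set.Ioi (0:ℝ), ENNReal.ofReal (Real.exp (-(s * t)) * u t))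
          ≤ ENNReal.ofReal (C' * s ^ (-α)) := by
  obtain ⟨hα0, hα1⟩ := hα
  have hC : 0 < C := hc.trans_le (by simpa using (hbound 1 le_rfl).1.trans (hbound 1 le_rfl).2)
  have hI : 0 ≤ ∫ t in Ioo (0 : ℝ) 1, u t :=
    setIntegral_nonneg measurableSet_Ioo fun t ht => hupos t ht.1
  refine ⟨c * exp (-2) * 2 ^ (α - 1), by positivity, (∫ t in Ioo (0 : ℝ) 1, u t) + C * Gamma α,
    by positivity [Gamma_pos_of_pos hα0], 1, ⟨one_pos, le_rfl⟩, fun s ⟨hs0, hs1⟩ => ⟨?_, ?_⟩⟩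
  · exact ofReal_le_lintegral_exp_neg_mul_of_rpow_le hα1.le hc.le hs0 hs1 fun t ht => (hbound t ht).1
  · exact lintegral_exp_neg_mul_le_of_le_rpow hα0 hs0 hs1 hupos huint hC.le fun t ht => (hbound t ht).2

/-- If `u ≥ 0` on `(0,∞)` is measurable, integrable on `(0,1)` and
satisfies `c t^{α-1} ≤ u(t) ≤ C t^{α-1}` for `t ≥ 1`, then there exist `c', C' > 0` and
`s₀ ∈ (0,1]` with `c' s^{-α} ≤ ∫₀^∞ e^{-st} u(t) dt ≤ C' s^{-α}` for all `s ∈ (0,s₀]`. -/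
theorem stmt_10 (α : ℝ) (hα : α ∈ Set.Ioo (0:ℝ) 1)
    (u : ℝ → ℝ) (hum : Measurable u) (hupos : ∀ t > (0:ℝ), 0 ≤ u t)
    (huint : IntegrableOn u (Set.Ioo 0 1))
    (c C : ℝ) (hc : 0 < c) (hcC : c ≤ C)
    (hbound : ∀ t ≥ (1:ℝ), c * t ^ (α - 1) ≤ u t ∧ u t ≤ C * t ^ (α - 1)) :
    ∃ c' > (0:ℝ), ∃ C' > (0:ℝ), ∃ s₀ ∈ Set.Ioc (0:ℝ) 1, ∀ s ∈ Set.Ioc (0:ℝ) s₀,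
      ENNReal.ofReal (c' * s ^ (-α))
          ≤ (∫⁻ t in Set.Ioi (0:ℝ), ENNReal.ofReal (Real.exp (-(s * t)) * u t)) ∧
        (∫⁻ t in Set.Ioi (0:ℝ), ENNReal.ofReal (Real.exp (-(s * t)) * u t))
          ≤ ENNReal.ofReal (C' * s ^ (-α)) :=
  stmt_10_general α hα u hupos huint c C hc hbound
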